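/- Let F be an admissible Finsler structure on Ω, δ_F its intrinsic distance, and d_c* the intrinsic distance of the dual F*. Suppose at a point x ∈ Ω: (a) lim_{y→x} δ_F(x,y)/d_c*(x,y) = 1, (b) Δ_{d_c*}(x,v) ≤ F*(x,v) for all v, and (c) F(x,·) = (F*)*(x,·). If u is Lipschitz, differentiable at x, and Lip_{δ_F} u(x) ≤ 1, then F(x, ∇u(x)) ≤ 1. -/

import Mathlib

open MeasureTheory Filter Topology Set

/-- The dual Finsler structure `F*(x,w) := sup {⟨v,w⟩ : F(x,v) ≤ 1}`. -/
noncomputable def finslerDual {n : ℕ} (F : EuclideanSpace ℝ (Fin n) → EuclideanSpace ℝ (Fin n) → ℝ)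
    (x w : EuclideanSpace ℝ (Fin n)) : ℝ :=
  sSup ((fun v => (inner ℝ v w : ℝ)) '' {v | F x v ≤ 1})

/-!
Writing the difference quotient of `u` along `t ↦ x + t w` as
`|u(y) - u(x)| / d(x,y) · d(x,y) / t` gives `∂_w u(x) ≤ Lip_d u(x) · Δ_d(x,w)`, and (a) gives
`Lip_d u(x) ≤ Lip_{δ_F} u(x) ≤ 1`. Hence `⟨w, ∇u(x)⟩ ≤ F*(x,w)` for all `w`, and taking the
supremum over `F*(x,w) ≤ 1` bounds the bidual `F**(x,∇u(x)) = F(x,∇u(x))` by `1`.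
-/

lemma Filter.limsup_div_le_limsup_div_mul_limsup_div {ι : Type*} {l : Filter ι} [l.NeBot]
    {f g h : ι → ℝ} (hf : 0 ≤ᶠ[l] f) (hg : ∀ᶠ i in l, 0 < g i) (hh : ∀ᶠ i in l, 0 < h i)
    (hfg : IsBoundedUnder (· ≤ ·) l fun i => f i / g i)
    (hgh : IsBoundedUnder (· ≤ ·) l fun i => g i / h i) :
    limsup (fun i => f i / h i) l ≤
      limsup (fun i => f i / g i) l * limsup (fun i => g i / h i) l := by
  have hfac : (fun i => f i / h i) =ᶠ[l] (fun i => f i / g i) * (fun i => g i / h i) := by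
    filter_upwards [hg] with i hgi
    simp only [Pi.mul_apply, div_mul_div_cancel₀ hgi.ne']
  rw [limsup_congr hfac]
  refine limsup_mul_le ?_ hfg ?_ hgh
  · exact (hf.and hg).frequently.mono fun i hi => div_nonneg hi.1 hi.2.le
  · filter_upwards [hg, hh] with i hgi hhi using div_nonneg hgi.le hhi.le

section ComparableDistance

variable {E : Type*} [NormedAddCommGroup E] {d : E → E → ℝ} {α : ℝ}

/-- The pointwise Lipschitz constant `Lip_d u(x)`. -/
noncomputable def pointwiseLip (d : E → E → ℝ) (u : E → ℝ) (x : E) : ℝ :=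
  limsup (fun y => |u y - u x| / d x y) (𝓝[≠] x)

lemma nonneg_of_mul_norm_le (hα : 0 ≤ α) (hd : ∀ y z, α * ‖y - z‖ ≤ d y z) (y z : E) :
    0 ≤ d y z :=
  (mul_nonneg hα (norm_nonneg _)).trans (hd y z)

lemma pos_of_ne_of_mul_norm_le (hα : 0 < α) (hd : ∀ y z, α * ‖y - z‖ ≤ d y z) {y z : E}
    (hyz : y ≠ z) : 0 < d y z :=
  (mul_pos hα (norm_pos_iff.2 (sub_ne_zero.2 hyz))).trans_le (hd y z)

lemma eventually_pos_nhdsNE_of_mul_norm_le (hα : 0 < α) (hd : ∀ y z, α * ‖y - z‖ ≤ d y z)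
    (x : E) : ∀ᶠ y in 𝓝[≠] x, 0 < d x y := by
  filter_upwards [self_mem_nhdsWithin] with y hy
  exact pos_of_ne_of_mul_norm_le hα hd (Ne.symm hy)

lemma isBoundedUnder_abs_sub_div_of_lipschitzWith (hα : 0 < α)
    (hd : ∀ y z, α * ‖y - z‖ ≤ d y z) {u : E → ℝ} {K : NNReal} (hu : LipschitzWith K u)
    (x : E) : IsBoundedUnder (· ≤ ·) (𝓝[≠] x) (fun y => |u y - u x| / d x y) := by
  refine isBoundedUnder_of_eventually_le (a := K / α) ?_
  filter_upwards [eventually_pos_nhdsNE_of_mul_norm_le hα hd x] with y hy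
  rw [div_le_div_iff₀ hy hα]
  calc |u y - u x| * α ≤ K * ‖x - y‖ * α := by
        gcongr
        rw [← Real.dist_eq, dist_comm, ← dist_eq_norm]
        exact hu.dist_le_mul x y
    _ = K * (α * ‖x - y‖) := by ring
    _ ≤ K * d x y := by gcongr; exact hd x y

lemma pointwiseLip_le_of_tendsto_div {δ : E → E → ℝ} (hα : 0 < α)
    (hd : ∀ y z, α * ‖y - z‖ ≤ d y z) (hδ : ∀ y z, α * ‖y - z‖ ≤ δ y z)
    {u : E → ℝ} {K : NNReal} (hu : LipschitzWith K u) {x : E} [(𝓝[≠] x).NeBot]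
    (hδd : Tendsto (fun y => δ x y / d x y) (𝓝[≠] x) (𝓝 1)) :
    pointwiseLip d u x ≤ pointwiseLip δ u x := by
  have hfactor := limsup_div_le_limsup_div_mul_limsup_div (f := fun y => |u y - u x|)
    (Eventually.of_forall fun y => abs_nonneg _) (eventually_pos_nhdsNE_of_mul_norm_le hα hδ x)
    (eventually_pos_nhdsNE_of_mul_norm_le hα hd x)
    (isBoundedUnder_abs_sub_div_of_lipschitzWith hα hδ hu x) hδd.isBoundedUnder_le
  rwa [hδd.limsup_eq, mul_one] at hfactor

end ComparableDistance

section MetricDerivative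

variable {E : Type*} [NormedAddCommGroup E] [NormedSpace ℝ E] {d : E → E → ℝ} {α β : ℝ}

/-- The metric derivative `Δ_d(x,v)`. -/
noncomputable def metricDeriv (d : E → E → ℝ) (x v : E) : ℝ :=
  limsup (fun t : ℝ => d x (x + t • v) / t) (𝓝[>] 0)

lemma isBoundedUnder_metricDeriv (hd : ∀ y z, d y z ≤ β * ‖y - z‖) (x v : E) :
    IsBoundedUnder (· ≤ ·) (𝓝[>] 0) fun t : ℝ => d x (x + t • v) / t := by
  refine isBoundedUnder_of_eventually_le (a := β * ‖v‖) ?_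
  filter_upwards [self_mem_nhdsWithin] with t (ht : 0 < t)
  rw [div_le_iff₀ ht]
  calc d x (x + t • v) ≤ β * ‖x - (x + t • v)‖ := hd _ _
    _ = β * ‖v‖ * t := by
      rw [sub_add_cancel_left, norm_neg, norm_smul, Real.norm_of_nonneg ht.le]; ring

lemma metricDeriv_nonneg (hα : 0 ≤ α) (hd : ∀ y z, α * ‖y - z‖ ≤ d y z ∧ d y z ≤ β * ‖y - z‖)
    (x v : E) : 0 ≤ metricDeriv d x v := by
  refine le_limsup_of_frequently_le (Eventually.frequently ?_)
    (isBoundedUnder_metricDeriv (fun y z => (hd y z).2) x v)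
  filter_upwards [self_mem_nhdsWithin] with t (ht : 0 < t)
  exact div_nonneg (nonneg_of_mul_norm_le hα (fun y z => (hd y z).1) _ _) ht.le

lemma tendsto_add_smul_nhdsGT_nhdsNE (x : E) {v : E} (hv : v ≠ 0) :
    Tendsto (fun t : ℝ => x + t • v) (𝓝[>] 0) (𝓝[≠] x) := by
  refine tendsto_nhdsWithin_of_tendsto_nhds_of_eventually_within _ ?_ ?_
  · exact tendsto_nhdsWithin_of_tendsto_nhds <|
      (by fun_prop : Continuous fun t : ℝ => x + t • v).tendsto' 0 x (by simp)
  · filter_upwards [self_mem_nhdsWithin] with t (ht : 0 < t)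
    simpa [ht.ne'] using hv

lemma LipschitzWith.isBoundedUnder_slope_add_smul {u : E → ℝ} {K : NNReal}
    (hu : LipschitzWith K u) (x v : E) :
    IsBoundedUnder (· ≤ ·) (𝓝[>] 0) fun t : ℝ => |u (x + t • v) - u x| / t := by
  refine isBoundedUnder_of_eventually_le (a := K * ‖v‖) ?_
  filter_upwards [self_mem_nhdsWithin] with t (ht : 0 < t)
  rw [div_le_iff₀ ht, ← Real.dist_eq]
  calc dist (u (x + t • v)) (u x) ≤ K * dist (x + t • v) x := hu.dist_le_mul _ _
    _ = K * ‖v‖ * t := by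
      rw [dist_eq_norm, add_sub_cancel_left, norm_smul, Real.norm_of_nonneg ht.le]; ring

theorem fderiv_apply_le_pointwiseLip_mul_metricDeriv (hα : 0 < α)
    (hd : ∀ y z, α * ‖y - z‖ ≤ d y z ∧ d y z ≤ β * ‖y - z‖) {u : E → ℝ} {K : NNReal}
    (hu : LipschitzWith K u) {x : E} (hdiff : DifferentiableAt ℝ u x) {w : E} (hw : w ≠ 0) :
    fderiv ℝ u x w ≤ pointwiseLip d u x * metricDeriv d x w := by
  have hdα : ∀ y z, α * ‖y - z‖ ≤ d y z := fun y z => (hd y z).1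
  have hline := tendsto_add_smul_nhdsGT_nhdsNE x hw
  have hslope : Tendsto (fun t : ℝ => (u (x + t • w) - u x) / t) (𝓝[>] 0)
      (𝓝 (fderiv ℝ u x w)) := by
    have := (hdiff.hasFDerivAt.hasLineDerivAt w).tendsto_slope_zero_right
    simpa only [smul_eq_mul, div_eq_inv_mul] using this
  have hLip : limsup (fun t : ℝ => |u (x + t • w) - u x| / d x (x + t • w)) (𝓝[>] 0)
      ≤ pointwiseLip d u x :=
    hline.limsup_comp_le_limsup (u := fun y => |u y - u x| / d x y)
      (isCoboundedUnder_le_of_eventually_le _ (x := 0) (Eventually.of_forall fun y =>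
        div_nonneg (abs_nonneg _) (nonneg_of_mul_norm_le hα.le hdα _ _)))
      (isBoundedUnder_abs_sub_div_of_lipschitzWith hα hdα hu x)
  have hpos : ∀ᶠ t : ℝ in 𝓝[>] 0, 0 < d x (x + t • w) :=
    hline.eventually (eventually_pos_nhdsNE_of_mul_norm_le hα hdα x)
  calc fderiv ℝ u x w = limsup (fun t : ℝ => (u (x + t • w) - u x) / t) (𝓝[>] 0) :=
        hslope.limsup_eq.symm
    _ ≤ limsup (fun t : ℝ => |u (x + t • w) - u x| / t) (𝓝[>] 0) := by
        refine limsup_le_limsup ?_ hslope.isBoundedUnder_ge.isCoboundedUnder_le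
          (hu.isBoundedUnder_slope_add_smul x w)
        filter_upwards [self_mem_nhdsWithin] with t (ht : 0 < t)
        exact div_le_div_of_nonneg_right (le_abs_self _) ht.le
    _ ≤ limsup (fun t : ℝ => |u (x + t • w) - u x| / d x (x + t • w)) (𝓝[>] 0)
          * metricDeriv d x w :=
        limsup_div_le_limsup_div_mul_limsup_div (Eventually.of_forall fun t => abs_nonneg _)
          hpos self_mem_nhdsWithin
          (hline.isBoundedUnder_comp (isBoundedUnder_abs_sub_div_of_lipschitzWith hα hdα hu x))
          (isBoundedUnder_metricDeriv (fun y z => (hd y z).2) x w)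
    _ ≤ pointwiseLip d u x * metricDeriv d x w :=
        mul_le_mul_of_nonneg_right hLip (metricDeriv_nonneg hα.le hd x w)

end MetricDerivative

lemma le_one_of_forall_inner_le_one_of_eq_bidual {n : ℕ}
    {F : EuclideanSpace ℝ (Fin n) → EuclideanSpace ℝ (Fin n) → ℝ} {x g : EuclideanSpace ℝ (Fin n)}
    (hc : F x g = finslerDual (finslerDual F) x g)
    (h : ∀ w, finslerDual F x w ≤ 1 → inner ℝ w g ≤ 1) : F x g ≤ 1 := by
  rw [hc]
  refine Real.sSup_le ?_ zero_le_one
  rintro _ ⟨w, hw, rfl⟩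
  exact h w hw

theorem stmt10_general {n : ℕ}
    (F : EuclideanSpace ℝ (Fin n) → EuclideanSpace ℝ (Fin n) → ℝ)
    (δF d : EuclideanSpace ℝ (Fin n) → EuclideanSpace ℝ (Fin n) → ℝ)
    (α β : ℝ) (hα : 0 < α)
    (hd_equiv : ∀ y z, α * ‖y - z‖ ≤ d y z ∧ d y z ≤ β * ‖y - z‖)
    (hδ_equiv : ∀ y z, α * ‖y - z‖ ≤ δF y z ∧ δF y z ≤ β * ‖y - z‖)
    (x : EuclideanSpace ℝ (Fin n))
    -- (a): δ_F and d_c* agree at infinitesimal scale at x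
    (ha : Filter.Tendsto (fun y => δF x y / d x y) (nhdsWithin x {x}ᶜ) (nhds 1))
    -- (b): the metric derivative of d = d_c* is dominated by the dual F*
    (hb : ∀ v : EuclideanSpace ℝ (Fin n),
      Filter.limsup (fun t : ℝ => d x (x + t • v) / t) (nhdsWithin 0 (Set.Ioi 0))
        ≤ finslerDual F x v)
    -- (c): F(x,·) coincides with its bidual
    (hc : ∀ v, F x v = finslerDual (finslerDual F) x v)
    (u : EuclideanSpace ℝ (Fin n) → ℝ) (K : NNReal) (hu : LipschitzWith K u)
    (hdiff : DifferentiableAt ℝ u x)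
    (hlip : Filter.limsup (fun y => |u y - u x| / δF x y) (nhdsWithin x {x}ᶜ) ≤ 1) :
    F x (gradient u x) ≤ 1 := by
  refine le_one_of_forall_inner_le_one_of_eq_bidual (hc _) fun w hw => ?_
  rcases eq_or_ne w 0 with rfl | hw0
  · simp
  have : Nontrivial (EuclideanSpace ℝ (Fin n)) := ⟨⟨w, 0, hw0⟩⟩
  have hLip : pointwiseLip d u x ≤ 1 :=
    (pointwiseLip_le_of_tendsto_div hα (fun y z => (hd_equiv y z).1)
      (fun y z => (hδ_equiv y z).1) hu ha).trans hlip
  rw [real_inner_comm, inner_gradient_left]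
  calc fderiv ℝ u x w ≤ pointwiseLip d u x * metricDeriv d x w :=
        fderiv_apply_le_pointwiseLip_mul_metricDeriv hα hd_equiv hu hdiff hw0
    _ ≤ 1 := mul_le_one₀ hLip (metricDeriv_nonneg hα.le hd_equiv x w) ((hb w).trans hw)

/-- at a point `x` where (a) `δ_F(x,y)/d_c*(x,y) → 1` as `y → x`,
(b) the metric derivative `Δ_{d_c*}(x,v) ≤ F*(x,v)` for all `v`, and (c) `F(x,·)`
equals its bidual, any Lipschitz function `u` differentiable at `x` with
`Lip_{δ_F} u(x) ≤ 1` satisfies `F(x,∇u(x)) ≤ 1`. -/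
theorem stmt10 {n : ℕ} (hn : 2 ≤ n) (Ω : Set (EuclideanSpace ℝ (Fin n)))
    (hΩopen : IsOpen Ω)
    (F : EuclideanSpace ℝ (Fin n) → EuclideanSpace ℝ (Fin n) → ℝ)
    (δF d : EuclideanSpace ℝ (Fin n) → EuclideanSpace ℝ (Fin n) → ℝ)
    (α β : ℝ) (hα : 0 < α) (hαβ : α ≤ β)
    (hd_equiv : ∀ y z, α * ‖y - z‖ ≤ d y z ∧ d y z ≤ β * ‖y - z‖)
    (hδ_equiv : ∀ y z, α * ‖y - z‖ ≤ δF y z ∧ δF y z ≤ β * ‖y - z‖)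
    (x : EuclideanSpace ℝ (Fin n)) (hx : x ∈ Ω)
    -- (a): δ_F and d_c* agree at infinitesimal scale at x
    (ha : Filter.Tendsto (fun y => δF x y / d x y) (nhdsWithin x {x}ᶜ) (nhds 1))
    -- (b): the metric derivative of d = d_c* is dominated by the dual F*
    (hb : ∀ v : EuclideanSpace ℝ (Fin n),
      Filter.limsup (fun t : ℝ => d x (x + t • v) / t) (nhdsWithin 0 (Set.Ioi 0))
        ≤ finslerDual F x v)
    -- (c): F(x,·) coincides with its bidual
    (hc : ∀ v, F x v = finslerDual (finslerDual F) x v)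
    (u : EuclideanSpace ℝ (Fin n) → ℝ) (K : NNReal) (hu : LipschitzWith K u)
    (hdiff : DifferentiableAt ℝ u x)
    (hlip : Filter.limsup (fun y => |u y - u x| / δF x y) (nhdsWithin x {x}ᶜ) ≤ 1) :
    F x (gradient u x) ≤ 1 :=
  stmt10_general F δF d α β hα hd_equiv hδ_equiv x ha hb hc u K hu hdiff hlip
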